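/- arXiv:math/0303147 — 3 statements merged into one kernel-verified Lean document; each statement's English description precedes it below -/
import Mathlib

section
/- Let (P,ω) and (Q,ν) be finite labelled posets. Then E(P ⊕ Q, ω ⊕₁ ν) = E(P,ω) · E(Q,ν), where ⊕ denotes ordinal sum and ω ⊕₁ ν is any labelling of P ⊕ Q satisfying: (ω ⊕₁ ν)(x) < (ω ⊕₁ ν)(y) whenever ω(x) < ω(y) (x,y ∈ P), or ν(x) < ν(y) (x,y ∈ Q), or x ∈ Q and y ∈ P. -/
open Polynomial

/-- `σ : P → {1,…,k}` (realised as `Fin k`) is a `(P,ω)`-partition if it is order reversing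
and `x < y` with `ω x > ω y` implies `σ x > σ y`. -/
def IsPPartition {α : Type*} [PartialOrder α] (ω : α → ℕ) {k : ℕ} (σ : α → Fin k) : Prop :=
  (∀ x y : α, x ≤ y → σ y ≤ σ x) ∧ (∀ x y : α, x < y → ω y < ω x → σ y < σ x)

/-- The `E`-polynomial `E(P,ω) = Σₖ e_k(P,ω) xᵏ`, where `e_k(P,ω)` is the number of
surjective `(P,ω)`-partitions `σ : P → {1,…,k}`. -/
noncomputable def Epoly (α : Type*) [PartialOrder α] (ω : α → ℕ) : Polynomial ℝ :=
  ∑ k ∈ Finset.range (Nat.card α + 1),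
    C ((Nat.card {σ : α → Fin k // Function.Surjective σ ∧ IsPPartition ω σ} : ℕ) : ℝ) * X ^ k

/-!
Order reversal together with the labelling forces a surjective `(P ⊕ Q)`-partition onto
`{1,…,n}` to give every element of `Q` a smaller value than every element of `P`, so by
surjectivity it takes exactly the values `1,…,j` on `Q` and `j+1,…,n` on `P`, for a unique `j`.
Cutting at `j` is a bijection onto pairs of surjective partitions of `P` onto `n - j` values and
of `Q` onto `j` values, i.e. `e_n(P ⊕ Q) = Σ_{i+j=n} e_i(P) e_j(Q)`. Finally, `E(P,ω)` only sees
the relative order of the labels, so `ω ⊕₁ ν` may be replaced by its restrictions `ω` and `ν`.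
-/

open Finset Function

theorem Function.Injective.lt_iff_lt_of_forall_lt_imp {ι γ δ : Type*} [LinearOrder γ]
    [Preorder δ] {f : ι → γ} {g : ι → δ} (hf : Injective f)
    (hfg : ∀ x y, f x < f y → g x < g y) (x y : ι) : g x < g y ↔ f x < f y := by
  refine ⟨fun h => ?_, hfg x y⟩
  by_contra! hyx
  obtain hyx | hyx := hyx.lt_or_eq
  · exact (hfg y x hyx).not_gt h
  · exact (hf hyx ▸ h).false

section PPartition

variable {α : Type*} [PartialOrder α]

abbrev SurjPPartition (ω : α → ℕ) (k : ℕ) : Type _ :=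
  {σ : α → Fin k // Surjective σ ∧ IsPPartition ω σ}

theorem isPPartition_comp_iff {ω : α → ℕ} {k m : ℕ} {f : Fin k → Fin m} (hf : StrictMono f)
    {σ : α → Fin k} : IsPPartition ω (f ∘ σ) ↔ IsPPartition ω σ := by
  simp only [IsPPartition, comp_apply, hf.le_iff_le, hf.lt_iff_lt]

theorem Epoly_congr_labels {ω ω' : α → ℕ} (h : ∀ x y, ω' x < ω' y ↔ ω x < ω y) :
    Epoly α ω' = Epoly α ω := by
  simp only [Epoly, IsPPartition, h]

theorem card_surjPPartition_eq_zero [Finite α] (ω : α → ℕ) {k : ℕ} (hk : Nat.card α < k) :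
    Nat.card (SurjPPartition ω k) = 0 := by
  refine Nat.card_eq_zero.2 (.inl ⟨fun ⟨σ, hσ, _⟩ => ?_⟩)
  have := Nat.card_le_card_of_surjective σ hσ
  rw [Nat.card_fin] at this
  omega

theorem coeff_Epoly [Finite α] (ω : α → ℕ) (n : ℕ) :
    (Epoly α ω).coeff n = Nat.card (SurjPPartition ω n) := by
  simp only [Epoly, Polynomial.finsetSum_coeff, Polynomial.coeff_C_mul_X_pow, sum_ite_eq,
    mem_range]
  split_ifs with hn
  · rfl
  · rw [card_surjPPartition_eq_zero ω (by omega), Nat.cast_zero]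

end PPartition

section OrdinalGlue

variable {α β : Type*} {n : ℕ}

-- `β` is the upper summand, so an order-reversing map puts it on the smaller values.
def ordinalGlue {i j : ℕ} (h : i + j = n) (σα : α → Fin i) (σβ : β → Fin j) :
    α ⊕ₗ β → Fin n :=
  fun p => Sum.elim (fun a => Fin.cast h ((σα a).addNat j))
    (fun b => Fin.castLE (by omega) (σβ b)) (ofLex p)

def IsLexCut (σ : α ⊕ₗ β → Fin n) (j : ℕ) : Prop :=
  (∀ b, (σ (toLex (.inr b)) : ℕ) < j) ∧ ∀ a, j ≤ (σ (toLex (.inl a)) : ℕ)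

theorem exists_isLexCut [Finite α] {σ : α ⊕ₗ β → Fin n}
    (hσ : ∀ a b, σ (toLex (.inr b)) < σ (toLex (.inl a))) : ∃ j ≤ n, IsLexCut σ j := by
  cases isEmpty_or_nonempty α with
  | inl hα => exact ⟨n, le_rfl, fun b => (σ _).isLt, isEmptyElim⟩
  | inr hα =>
    obtain ⟨a₀, ha₀⟩ := Finite.exists_min fun a => σ (toLex (.inl a))
    exact ⟨σ (toLex (.inl a₀)), (σ _).isLt.le, fun b => hσ a₀ b, fun a => ha₀ a⟩

theorem IsLexCut.eq_of_surjective {σ : α ⊕ₗ β → Fin n} (hσ : Surjective σ) {j j' : ℕ}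
    (hj : IsLexCut σ j) (hj' : IsLexCut σ j') (hjn : j ≤ n) (hj'n : j' ≤ n) : j = j' := by
  have key : ∀ {j j'}, IsLexCut σ j → IsLexCut σ j' → j ≤ n → j ≤ j' := by
    intro j j' hj hj' hjn
    by_contra! hlt
    obtain ⟨p, hp⟩ := hσ ⟨j', by omega⟩
    obtain ⟨a | b, rfl⟩ := toLex.surjective p
    · have := hj.2 a; rw [hp, Fin.val_mk] at this; omega
    · have := hj'.1 b; rw [hp, Fin.val_mk] at this; omega
  exact le_antisymm (key hj hj' hjn) (key hj' hj hj'n)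

theorem isLexCut_ordinalGlue {i j : ℕ} (h : i + j = n) (σα : α → Fin i)
    (σβ : β → Fin j) :
    IsLexCut (ordinalGlue h σα σβ) j :=
  ⟨fun b => (σβ b).isLt, fun _ => Nat.le_add_left _ _⟩

theorem ordinalGlue_inj {i j : ℕ} {h : i + j = n} {σα σα' : α → Fin i}
    {σβ σβ' : β → Fin j} :
    ordinalGlue h σα σβ = ordinalGlue h σα' σβ' ↔ σα = σα' ∧ σβ = σβ' := by
  refine ⟨fun hg => ⟨funext fun a => ?_, funext fun b => ?_⟩,
    fun ⟨hα, hβ⟩ => hα ▸ hβ ▸ rfl⟩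
  · simpa [ordinalGlue] using congrFun hg (toLex (.inl a))
  · simpa [ordinalGlue] using congrFun hg (toLex (.inr b))

theorem exists_ordinalGlue_eq {σ : α ⊕ₗ β → Fin n} {j : ℕ} (hjn : j ≤ n)
    (hj : IsLexCut σ j) : ∃ σα σβ, ordinalGlue (Nat.sub_add_cancel hjn) σα σβ = σ := by
  refine ⟨fun a => ⟨σ (toLex (.inl a)) - j, by
      have := hj.2 a; have := (σ (toLex (.inl a))).isLt; omega⟩,
    fun b => ⟨σ (toLex (.inr b)), hj.1 b⟩, ?_⟩
  funext p
  obtain ⟨a | b, rfl⟩ := toLex.surjective p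
  · have := hj.2 a
    ext; simp [ordinalGlue]; omega
  · rfl

theorem surjective_ordinalGlue_iff {i j : ℕ} (h : i + j = n) (σα : α → Fin i)
    (σβ : β → Fin j) : Surjective (ordinalGlue h σα σβ) ↔ Surjective σα ∧ Surjective σβ := by
  simp only [Surjective, toLex.surjective.exists, Sum.exists, ordinalGlue, ofLex_toLex,
    Sum.elim_inl, Sum.elim_inr, Fin.ext_iff, Fin.val_cast, Fin.val_addNat, Fin.val_castLE]
  refine ⟨fun hg => ⟨fun t => ?_, fun t => ?_⟩, fun ⟨hα, hβ⟩ t => ?_⟩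
  · obtain ⟨a, ha⟩ | ⟨b, hb⟩ := hg ⟨t + j, by omega⟩
    · exact ⟨a, by simpa using ha⟩
    · have := (σβ b).isLt; simp at hb; omega
  · obtain ⟨a, ha⟩ | ⟨b, hb⟩ := hg ⟨t, by omega⟩
    · simp at ha; omega
    · exact ⟨b, hb⟩
  · by_cases htj : j ≤ t
    · obtain ⟨a, ha⟩ := hα ⟨t - j, by omega⟩
      exact .inl ⟨a, by simp at ha; omega⟩
    · obtain ⟨b, hb⟩ := hβ ⟨t, by omega⟩
      exact .inr ⟨b, hb⟩

end OrdinalGlue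

section OrdinalSum

variable {α β : Type*} [PartialOrder α] [PartialOrder β]

theorem isPPartition_lex_iff {n : ℕ} {μ : α ⊕ β → ℕ}
    (hμ : ∀ a b, μ (.inr b) < μ (.inl a)) (σ : α ⊕ₗ β → Fin n) :
    IsPPartition (fun p => μ (ofLex p)) σ ↔
      IsPPartition (fun a => μ (.inl a)) (fun a => σ (toLex (.inl a))) ∧
      IsPPartition (fun b => μ (.inr b)) (fun b => σ (toLex (.inr b))) ∧
      ∀ a b, σ (toLex (.inr b)) < σ (toLex (.inl a)) := by
  constructor
  · rintro ⟨hle, hlt⟩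
    exact ⟨⟨fun x y h => hle _ _ (Sum.Lex.inl_le_inl_iff.2 h),
        fun x y h => hlt _ _ (Sum.Lex.inl_lt_inl_iff.2 h)⟩,
      ⟨fun x y h => hle _ _ (Sum.Lex.inr_le_inr_iff.2 h),
        fun x y h => hlt _ _ (Sum.Lex.inr_lt_inr_iff.2 h)⟩,
      fun a b => hlt _ _ (Sum.Lex.inl_lt_inr a b) (hμ a b)⟩
  · rintro ⟨⟨hleα, hltα⟩, ⟨hleβ, hltβ⟩, hcross⟩
    constructor
    · rintro (a | b) (a' | b') h
      · exact hleα a a' (Sum.Lex.inl_le_inl_iff.1 h)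
      · exact (hcross a b').le
      · exact (Sum.Lex.not_inr_le_inl h).elim
      · exact hleβ b b' (Sum.Lex.inr_le_inr_iff.1 h)
    · rintro (a | b) (a' | b') h
      · exact hltα a a' (Sum.Lex.inl_lt_inl_iff.1 h)
      · exact fun _ => hcross a b'
      · exact (Sum.Lex.not_inr_lt_inl h).elim
      · exact hltβ b b' (Sum.Lex.inr_lt_inr_iff.1 h)

theorem isPPartition_ordinalGlue_iff {n : ℕ} {μ : α ⊕ β → ℕ}
    (hμ : ∀ a b, μ (.inr b) < μ (.inl a)) {i j : ℕ} (h : i + j = n) (σα : α → Fin i)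
    (σβ : β → Fin j) :
    IsPPartition (fun p => μ (ofLex p)) (ordinalGlue h σα σβ) ↔
      IsPPartition (fun a => μ (.inl a)) σα ∧ IsPPartition (fun b => μ (.inr b)) σβ := by
  have hcross : ∀ a b, ordinalGlue h σα σβ (toLex (.inr b)) <
      ordinalGlue h σα σβ (toLex (.inl a)) :=
    fun a b => Fin.lt_def.2 ((σβ b).isLt.trans_le (Nat.le_add_left _ _))
  have hshift : StrictMono fun t : Fin i => Fin.cast h (t.addNat j) :=
    fun s t hst => Fin.lt_def.2 (by simpa using Fin.lt_def.1 hst)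
  rw [isPPartition_lex_iff hμ, and_iff_left hcross]
  exact and_congr (isPPartition_comp_iff hshift)
    (isPPartition_comp_iff (Fin.strictMono_castLE (by omega)))

theorem card_surjPPartition_lex [Finite α] [Finite β] {μ : α ⊕ β → ℕ}
    (hμ : ∀ a b, μ (.inr b) < μ (.inl a)) (n : ℕ) :
    Nat.card (SurjPPartition (fun p : α ⊕ₗ β => μ (ofLex p)) n) =
      ∑ p ∈ antidiagonal n, Nat.card (SurjPPartition (fun a => μ (.inl a)) p.1) *
        Nat.card (SurjPPartition (fun b => μ (.inr b)) p.2) := by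
  let F : (Σ p : antidiagonal n, SurjPPartition (fun a => μ (.inl a)) p.1.1 ×
      SurjPPartition (fun b => μ (.inr b)) p.1.2) →
      SurjPPartition (fun p : α ⊕ₗ β => μ (ofLex p)) n :=
    fun x => ⟨ordinalGlue (HasAntidiagonal.mem_antidiagonal.1 x.1.2) x.2.1 x.2.2,
      (surjective_ordinalGlue_iff _ _ _).2 ⟨x.2.1.2.1, x.2.2.2.1⟩,
      (isPPartition_ordinalGlue_iff hμ _ _ _).2 ⟨x.2.1.2.2, x.2.2.2.2⟩⟩
  have hF : Bijective F := by
    refine ⟨?_, ?_⟩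
    · rintro ⟨⟨p, hp⟩, ⟨σα, hσα⟩, ⟨σβ, hσβ⟩⟩ ⟨⟨p', hp'⟩, ⟨σα', hσα'⟩, ⟨σβ', hσβ'⟩⟩
        hFeq
      rw [HasAntidiagonal.mem_antidiagonal] at hp hp'
      have hg : ordinalGlue hp σα σβ = ordinalGlue hp' σα' σβ' := congrArg Subtype.val hFeq
      have hj : p.2 = p'.2 := (isLexCut_ordinalGlue hp σα σβ).eq_of_surjective
        ((surjective_ordinalGlue_iff hp σα σβ).2 ⟨hσα.1, hσβ.1⟩)
        (hg ▸ isLexCut_ordinalGlue hp' σα' σβ') (by omega) (by omega)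
      obtain rfl : p = p' := Prod.ext (by omega) hj
      obtain ⟨rfl, rfl⟩ := ordinalGlue_inj.1 hg
      rfl
    · rintro ⟨σ, hσs, hσp⟩
      obtain ⟨j, hjn, hj⟩ := exists_isLexCut ((isPPartition_lex_iff hμ σ).1 hσp).2.2
      obtain ⟨σα, σβ, rfl⟩ := exists_ordinalGlue_eq hjn hj
      obtain ⟨hα, hβ⟩ := (surjective_ordinalGlue_iff _ _ _).1 hσs
      obtain ⟨hα', hβ'⟩ := (isPPartition_ordinalGlue_iff hμ _ _ _).1 hσp
      exact ⟨⟨⟨(n - j, j), HasAntidiagonal.mem_antidiagonal.2 (Nat.sub_add_cancel hjn)⟩,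
        ⟨σα, hα, hα'⟩, ⟨σβ, hβ, hβ'⟩⟩, rfl⟩
  rw [← Nat.card_congr (Equiv.ofBijective F hF), Nat.card_sigma,
    ← sum_coe_sort (antidiagonal n)]
  simp only [Nat.card_prod]

theorem Epoly_lex_eq_mul [Finite α] [Finite β] {μ : α ⊕ β → ℕ}
    (hμ : ∀ a b, μ (.inr b) < μ (.inl a)) :
    Epoly (α ⊕ₗ β) (fun p => μ (ofLex p)) =
      Epoly α (fun a => μ (.inl a)) * Epoly β (fun b => μ (.inr b)) := by
  have : Finite (α ⊕ₗ β) := inferInstanceAs (Finite (α ⊕ β))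
  ext n
  simp only [Polynomial.coeff_mul, coeff_Epoly, card_surjPPartition_lex hμ, Nat.cast_sum,
    Nat.cast_mul]

end OrdinalSum

theorem Epoly_ordinal_sum_one_general (α β : Type) [PartialOrder α] [PartialOrder β]
    [Finite α] [Finite β]
    (ω : α → ℕ) (ν : β → ℕ) (hω : Function.Injective ω) (hν : Function.Injective ν)
    (μ : α ⊕ β → ℕ)
    (h1 : ∀ x y : α, ω x < ω y → μ (Sum.inl x) < μ (Sum.inl y))
    (h2 : ∀ x y : β, ν x < ν y → μ (Sum.inr x) < μ (Sum.inr y))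
    (h3 : ∀ (x : β) (y : α), μ (Sum.inr x) < μ (Sum.inl y)) :
    Epoly (α ⊕ₗ β) (fun p => μ (ofLex p)) = Epoly α ω * Epoly β ν := by
  rw [Epoly_lex_eq_mul fun a b => h3 b a,
    Epoly_congr_labels (hω.lt_iff_lt_of_forall_lt_imp h1),
    Epoly_congr_labels (hν.lt_iff_lt_of_forall_lt_imp h2)]

/-- **Proposition 3.1, first part.** For the ordinal sum `P ⊕ Q` with a labelling `μ = ω ⊕₁ ν`
(labels increase from `Q` to `P`), `E(P ⊕ Q, ω ⊕₁ ν) = E(P,ω) · E(Q,ν)`. -/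
theorem Epoly_ordinal_sum_one (α β : Type) [PartialOrder α] [PartialOrder β]
    [Finite α] [Finite β]
    (ω : α → ℕ) (ν : β → ℕ) (hω : Function.Injective ω) (hν : Function.Injective ν)
    (μ : α ⊕ β → ℕ) (hμ : Function.Injective μ)
    (h1 : ∀ x y : α, ω x < ω y → μ (Sum.inl x) < μ (Sum.inl y))
    (h2 : ∀ x y : β, ν x < ν y → μ (Sum.inr x) < μ (Sum.inr y))
    (h3 : ∀ (x : β) (y : α), μ (Sum.inr x) < μ (Sum.inl y)) :
    Epoly (α ⊕ₗ β) (fun p => μ (ofLex p)) = Epoly α ω * Epoly β ν :=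
  Epoly_ordinal_sum_one_general α β ω ν hω hν μ h1 h2 h3
end

section
/- Let (P,ω) and (Q,ν) be nonempty finite labelled posets. Then x · E(P ⊕ Q, ω ⊕₀ ν) = (x+1) · E(P,ω) · E(Q,ν), where ⊕ denotes ordinal sum and ω ⊕₀ ν is any labelling of P ⊕ Q satisfying: (ω ⊕₀ ν)(x) < (ω ⊕₀ ν)(y) whenever ω(x) < ω(y) (x,y ∈ P), or ν(x) < ν(y) (x,y ∈ Q), or x ∈ P and y ∈ Q. -/
open Polynomial

/-! ### Auxiliary definitions -/

/-- The type of surjective `(P,w)`-partitions with values in `Fin k`. -/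
def SPart (γ : Type) [PartialOrder γ] (w : γ → ℕ) (k : ℕ) : Type :=
  {σ : γ → Fin k // Function.Surjective σ ∧ IsPPartition w σ}

noncomputable def ecnt (γ : Type) [PartialOrder γ] (w : γ → ℕ) (k : ℕ) : ℕ :=
  Nat.card (SPart γ w k)

instance SPart.finite (γ : Type) [PartialOrder γ] [Finite γ] (w : γ → ℕ) (k : ℕ) :
    Finite (SPart γ w k) := by
  unfold SPart; infer_instance

lemma ecnt_zero (γ : Type) [PartialOrder γ] [Nonempty γ] (w : γ → ℕ) : ecnt γ w 0 = 0 := by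
  have : IsEmpty (SPart γ w 0) := ⟨fun σ => (σ.1 (Classical.arbitrary γ)).elim0⟩
  exact Nat.card_of_isEmpty

lemma ecnt_eq_zero_of_lt (γ : Type) [PartialOrder γ] [Finite γ] (w : γ → ℕ) (k : ℕ)
    (h : Nat.card γ < k) : ecnt γ w k = 0 := by
  have : IsEmpty (SPart γ w k) := ⟨fun σ => by
    have h2 := Nat.card_le_card_of_surjective σ.1 σ.2.1
    rw [Nat.card_eq_fintype_card, Fintype.card_fin] at h2
    omega⟩
  exact Nat.card_of_isEmpty

lemma coeff_Epoly_s15 (γ : Type) [PartialOrder γ] [Finite γ] [Nonempty γ] (w : γ → ℕ) (m : ℕ) :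
    (Epoly γ w).coeff m = (ecnt γ w m : ℝ) := by
  unfold Epoly
  rw [finset_sum_coeff]
  simp only [coeff_C_mul, coeff_X_pow, mul_ite, mul_one, mul_zero]
  rw [Finset.sum_ite_eq]
  by_cases hm : m ∈ Finset.range (Nat.card γ + 1)
  · rw [if_pos hm]; rfl
  · rw [if_neg hm, ecnt_eq_zero_of_lt γ w m (by simpa using hm)]
    simp
section Core

variable {α β : Type} [PartialOrder α] [PartialOrder β]

lemma lbl_iff {γ : Type} (u v : γ → ℕ) (hu : Function.Injective u) (hv : Function.Injective v)
    (h : ∀ x y, u x < u y → v x < v y) : ∀ x y, v x < v y ↔ u x < u y := by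
  intro x y
  constructor
  · intro hv'
    rcases lt_trichotomy (u x) (u y) with h' | h' | h'
    · exact h'
    · cases hu h'; exact absurd hv' (lt_irrefl _)
    · exact absurd hv' (not_lt.2 (h y x h').le)
  · exact h x y

/-- Glue `f : α → Fin a` (shifted up by `t`) and `g : β → Fin b` into a map on `α ⊕ₗ β`. -/
def glueFun {a b t k : ℕ} (hta : t + a = k) (hb : b ≤ k)
    (f : α → Fin a) (g : β → Fin b) : α ⊕ₗ β → Fin k :=
  fun p => Sum.elim
    (fun x => (⟨t + (f x : ℕ), by have := (f x).isLt; omega⟩ : Fin k))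
    (fun y => (⟨(g y : ℕ), lt_of_lt_of_le (g y).isLt hb⟩ : Fin k)) (ofLex p)

lemma glueFun_surj {a b t k : ℕ} (hta : t + a = k) (hb : b ≤ k) (ht : t ≤ b)
    {f : α → Fin a} {g : β → Fin b}
    (hf : Function.Surjective f) (hg : Function.Surjective g) :
    Function.Surjective (glueFun hta hb f g) := by
  intro v
  by_cases hv : (v : ℕ) < b
  · obtain ⟨y, hy⟩ := hg ⟨v, hv⟩
    refine ⟨toLex (Sum.inr y), ?_⟩
    have : (g y : ℕ) = v := by rw [hy]
    exact Fin.ext this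
  · have hv1 : t ≤ (v : ℕ) := le_trans ht (not_lt.1 hv)
    have hv2 : (v : ℕ) - t < a := by have := v.isLt; omega
    obtain ⟨x, hx⟩ := hf ⟨(v : ℕ) - t, hv2⟩
    refine ⟨toLex (Sum.inl x), ?_⟩
    apply Fin.ext
    have : (f x : ℕ) = (v : ℕ) - t := by rw [hx]
    show t + (f x : ℕ) = (v : ℕ)
    omega

lemma glueFun_part {a b t k : ℕ} (hta : t + a = k) (hb : b ≤ k) (hb1 : b ≤ t + 1)
    {ω : α → ℕ} {ν : β → ℕ} {μ : α ⊕ β → ℕ}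
    (hlA : ∀ x y : α, μ (Sum.inl x) < μ (Sum.inl y) ↔ ω x < ω y)
    (hlB : ∀ x y : β, μ (Sum.inr x) < μ (Sum.inr y) ↔ ν x < ν y)
    (h3 : ∀ (x : α) (y : β), μ (Sum.inl x) < μ (Sum.inr y))
    {f : α → Fin a} {g : β → Fin b}
    (hf : IsPPartition ω f) (hg : IsPPartition ν g) :
    IsPPartition (fun p => μ (ofLex p)) (glueFun hta hb f g) := by
  constructor
  · intro p q hpq
    rcases p with x | y <;> rcases q with x' | y'
    · have h' : x ≤ x' := Sum.Lex.inl_le_inl_iff.mp hpq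
      have hnat : (f x' : ℕ) ≤ (f x : ℕ) := hf.1 x x' h'
      simp only [glueFun, Fin.le_def]
      show t + (f x' : ℕ) ≤ t + (f x : ℕ)
      omega
    · have hgy : (g y' : ℕ) < b := (g y').isLt
      simp only [glueFun, Fin.le_def]
      show (g y' : ℕ) ≤ t + (f x : ℕ)
      omega
    · exact absurd hpq Sum.Lex.not_inr_le_inl
    · have h' : y ≤ y' := Sum.Lex.inr_le_inr_iff.mp hpq
      exact hg.1 y y' h'
  · intro p q hpq hl
    rcases p with x | y <;> rcases q with x' | y'
    · have h' : x < x' := Sum.Lex.inl_lt_inl_iff.mp hpq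
      have hw : ω x' < ω x := (hlA x' x).mp hl
      have hnat : (f x' : ℕ) < (f x : ℕ) := hf.2 x x' h' hw
      simp only [glueFun, Fin.lt_def]
      show t + (f x' : ℕ) < t + (f x : ℕ)
      omega
    · exact absurd hl (not_lt.2 (h3 x y').le)
    · exact absurd hpq Sum.Lex.not_inr_lt_inl
    · have h' : y < y' := Sum.Lex.inr_lt_inr_iff.mp hpq
      have hw : ν y' < ν y := (hlB y' y).mp hl
      exact hg.2 y y' h' hw

lemma glueFun_recover [Nonempty α] [Nonempty β] {a b t a' b' t' k : ℕ}
    {hta : t + a = k} {hb : b ≤ k} {hta' : t' + a' = k} {hb' : b' ≤ k}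
    {f : α → Fin a} {g : β → Fin b} {f' : α → Fin a'} {g' : β → Fin b'}
    (hf : Function.Surjective f) (hg : Function.Surjective g)
    (hf' : Function.Surjective f') (hg' : Function.Surjective g')
    (heq : glueFun hta hb f g = glueFun hta' hb' f' g') : b = b' ∧ t = t' := by
  have hbpos : 0 < b := (g (Classical.arbitrary β)).pos
  have hbpos' : 0 < b' := (g' (Classical.arbitrary β)).pos
  have hg_eq : ∀ y, (g y : ℕ) = (g' y : ℕ) := by
    intro y
    have := congrFun heq (toLex (Sum.inr y))
    exact congrArg Fin.val this
  have hf_eq : ∀ x, t + (f x : ℕ) = t' + (f' x : ℕ) := by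
    intro x
    have := congrFun heq (toLex (Sum.inl x))
    exact congrArg Fin.val this
  constructor
  · obtain ⟨y1, hy1⟩ := hg ⟨b - 1, by omega⟩
    obtain ⟨y2, hy2⟩ := hg' ⟨b' - 1, by omega⟩
    have e1 := hg_eq y1
    have e2 := hg_eq y2
    rw [hy1] at e1
    rw [hy2] at e2
    have i1 : (g' y1 : ℕ) < b' := (g' y1).isLt
    have i2 : (g y2 : ℕ) < b := (g y2).isLt
    simp only at e1 e2
    omega
  · obtain ⟨x1, hx1⟩ := hf ⟨0, (f (Classical.arbitrary α)).pos⟩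
    obtain ⟨x2, hx2⟩ := hf' ⟨0, (f' (Classical.arbitrary α)).pos⟩
    have e1 := hf_eq x1
    have e2 := hf_eq x2
    rw [hx1] at e1
    rw [hx2] at e2
    have i2 : 0 ≤ (f x2 : ℕ) := Nat.zero_le _
    simp only at e1 e2
    omega

end Core
section Big

variable {α β : Type} [PartialOrder α] [PartialOrder β]
variable {ω : α → ℕ} {ν : β → ℕ} {μ : α ⊕ β → ℕ}

/-- Decomposition data: a pair of surjective partitions on `α` and `β` whose sizes add up
to `k` (disjoint value ranges) or `k+1` (overlapping in one value). -/
def DT (α β : Type) [PartialOrder α] [PartialOrder β] (ω : α → ℕ) (ν : β → ℕ) (k : ℕ) : Type :=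
  ((p : Finset.HasAntidiagonal.antidiagonal k) × (SPart α ω p.1.1 × SPart β ν p.1.2)) ⊕
  ((p : Finset.HasAntidiagonal.antidiagonal (k + 1)) × (SPart α ω p.1.1 × SPart β ν p.1.2))

def bigGlue [Nonempty α] [Nonempty β]
    (hlA : ∀ x y : α, μ (Sum.inl x) < μ (Sum.inl y) ↔ ω x < ω y)
    (hlB : ∀ x y : β, μ (Sum.inr x) < μ (Sum.inr y) ↔ ν x < ν y)
    (h3 : ∀ (x : α) (y : β), μ (Sum.inl x) < μ (Sum.inr y)) (k : ℕ) :
    DT α β ω ν k → SPart (α ⊕ₗ β) (fun p => μ (ofLex p)) k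
  | Sum.inl ⟨⟨⟨a, b⟩, hab⟩, ⟨f, hf, hfp⟩, ⟨g, hg, hgp⟩⟩ =>
    have hab' : a + b = k := Finset.HasAntidiagonal.mem_antidiagonal.mp hab
    ⟨glueFun (t := b) (by show b + a = k; omega) (by show b ≤ k; omega) f g,
      glueFun_surj _ _ le_rfl hf hg,
      glueFun_part _ _ (by show b ≤ b + 1; omega) hlA hlB h3 hfp hgp⟩
  | Sum.inr ⟨⟨⟨a, b⟩, hab⟩, ⟨f, hf, hfp⟩, ⟨g, hg, hgp⟩⟩ =>
    have hab' : a + b = k + 1 := Finset.HasAntidiagonal.mem_antidiagonal.mp hab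
    have ha : 0 < a := (f (Classical.arbitrary α)).pos
    have hbp : 0 < b := (g (Classical.arbitrary β)).pos
    ⟨glueFun (t := b - 1) (by show b - 1 + a = k; omega) (by show b ≤ k; omega) f g,
      glueFun_surj _ _ (by show b - 1 ≤ b; omega) hf hg,
      glueFun_part _ _ (by show b ≤ b - 1 + 1; omega) hlA hlB h3 hfp hgp⟩

lemma bigGlue_inj [Nonempty α] [Nonempty β]
    (hlA : ∀ x y : α, μ (Sum.inl x) < μ (Sum.inl y) ↔ ω x < ω y)
    (hlB : ∀ x y : β, μ (Sum.inr x) < μ (Sum.inr y) ↔ ν x < ν y)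
    (h3 : ∀ (x : α) (y : β), μ (Sum.inl x) < μ (Sum.inr y)) (k : ℕ) :
    Function.Injective (bigGlue hlA hlB h3 k) := by
  intro d1 d2 h
  have hσ := congrArg Subtype.val h
  clear h
  rcases d1 with ⟨⟨⟨a1, b1⟩, hab1⟩, ⟨f1, hf1, hfp1⟩, ⟨g1, hg1, hgp1⟩⟩ |
    ⟨⟨⟨a1, b1⟩, hab1⟩, ⟨f1, hf1, hfp1⟩, ⟨g1, hg1, hgp1⟩⟩ <;>
  rcases d2 with ⟨⟨⟨a2, b2⟩, hab2⟩, ⟨f2, hf2, hfp2⟩, ⟨g2, hg2, hgp2⟩⟩ |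
    ⟨⟨⟨a2, b2⟩, hab2⟩, ⟨f2, hf2, hfp2⟩, ⟨g2, hg2, hgp2⟩⟩ <;>
  simp only [bigGlue] at hσ
  · -- inl / inl
    obtain ⟨hbb, htt⟩ := glueFun_recover hf1 hg1 hf2 hg2 hσ
    have hbb' : b1 = b2 := hbb
    have ha1 : a1 + b1 = k := Finset.HasAntidiagonal.mem_antidiagonal.mp hab1
    have ha2 : a2 + b2 = k := Finset.HasAntidiagonal.mem_antidiagonal.mp hab2
    obtain rfl : b1 = b2 := hbb'
    obtain rfl : a1 = a2 := by omega
    have hfe : f1 = f2 := by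
      funext x
      apply Fin.ext
      have h0 := congrFun hσ (toLex (Sum.inl x))
      have hval : b1 + (f1 x : ℕ) = b1 + (f2 x : ℕ) := congrArg Fin.val h0
      omega
    have hge : g1 = g2 := by
      funext y
      apply Fin.ext
      have h0 := congrFun hσ (toLex (Sum.inr y))
      have hval := congrArg Fin.val h0
      exact hval
    subst hfe; subst hge
    rfl
  · -- inl / inr : impossible
    obtain ⟨hbb, htt⟩ := glueFun_recover hf1 hg1 hf2 hg2 hσ
    have hbb' : b1 = b2 := hbb
    have htt' : b1 = b2 - 1 := htt
    have hbp2 : 0 < b2 := (g2 (Classical.arbitrary β)).pos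
    exfalso; omega
  · -- inr / inl : impossible
    obtain ⟨hbb, htt⟩ := glueFun_recover hf1 hg1 hf2 hg2 hσ
    have hbb' : b1 = b2 := hbb
    have htt' : b1 - 1 = b2 := htt
    have hbp1 : 0 < b1 := (g1 (Classical.arbitrary β)).pos
    exfalso; omega
  · -- inr / inr
    obtain ⟨hbb, htt⟩ := glueFun_recover hf1 hg1 hf2 hg2 hσ
    have hbb' : b1 = b2 := hbb
    have ha1 : a1 + b1 = k + 1 := Finset.HasAntidiagonal.mem_antidiagonal.mp hab1
    have ha2 : a2 + b2 = k + 1 := Finset.HasAntidiagonal.mem_antidiagonal.mp hab2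
    have hbp1 : 0 < b1 := (g1 (Classical.arbitrary β)).pos
    obtain rfl : b1 = b2 := hbb'
    obtain rfl : a1 = a2 := by omega
    have hfe : f1 = f2 := by
      funext x
      apply Fin.ext
      have h0 := congrFun hσ (toLex (Sum.inl x))
      have hval : (b1 - 1) + (f1 x : ℕ) = (b1 - 1) + (f2 x : ℕ) := congrArg Fin.val h0
      omega
    have hge : g1 = g2 := by
      funext y
      apply Fin.ext
      have h0 := congrFun hσ (toLex (Sum.inr y))
      have hval := congrArg Fin.val h0
      exact hval
    subst hfe; subst hge
    rfl

end Big
section Surj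

variable {α β : Type} [PartialOrder α] [PartialOrder β]
variable {ω : α → ℕ} {ν : β → ℕ} {μ : α ⊕ β → ℕ}

lemma bigGlue_surj [Finite α] [Finite β] [Nonempty α] [Nonempty β]
    (hlA : ∀ x y : α, μ (Sum.inl x) < μ (Sum.inl y) ↔ ω x < ω y)
    (hlB : ∀ x y : β, μ (Sum.inr x) < μ (Sum.inr y) ↔ ν x < ν y)
    (h3 : ∀ (x : α) (y : β), μ (Sum.inl x) < μ (Sum.inr y)) (k : ℕ) :
    Function.Surjective (bigGlue hlA hlB h3 k) := by
  rintro ⟨σ, hsurj, hle, hstrict⟩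
  obtain ⟨y₀, hy₀⟩ := Finite.exists_max fun y : β => (σ (toLex (Sum.inr y)) : ℕ)
  obtain ⟨x₀, hx₀⟩ := Finite.exists_min fun x : α => (σ (toLex (Sum.inl x)) : ℕ)
  set B : ℕ := (σ (toLex (Sum.inr y₀)) : ℕ) + 1 with hBdef
  set T : ℕ := (σ (toLex (Sum.inl x₀)) : ℕ) with hTdef
  have hk : 0 < k := (σ (toLex (Sum.inl x₀))).pos
  have cross : ∀ (x : α) (y : β), (σ (toLex (Sum.inr y)) : ℕ) ≤ (σ (toLex (Sum.inl x)) : ℕ) :=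
    fun x y => hle _ _ (Sum.Lex.inl_le_inr x y)
  have hBT : B - 1 ≤ T := by have := cross x₀ y₀; omega
  have hBk : B ≤ k := by have := (σ (toLex (Sum.inr y₀))).isLt; omega
  have hTk : T < k := (σ (toLex (Sum.inl x₀))).isLt
  have hTB : T ≤ B := by
    by_contra hc
    push_neg at hc
    obtain ⟨p, hp⟩ := hsurj ⟨B, by omega⟩
    rcases p with x | y
    · have hval : (σ (toLex (Sum.inl x)) : ℕ) = B := congrArg Fin.val hp
      have := hx₀ x; omega
    · have hval : (σ (toLex (Sum.inr y)) : ℕ) = B := congrArg Fin.val hp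
      have := hy₀ y; omega
  have hitB : ∀ v, v < B → ∃ y, (σ (toLex (Sum.inr y)) : ℕ) = v := by
    intro v hv
    obtain ⟨p, hp⟩ := hsurj ⟨v, by omega⟩
    rcases p with x | y
    · have hval : (σ (toLex (Sum.inl x)) : ℕ) = v := congrArg Fin.val hp
      have h1 := hx₀ x
      exact ⟨y₀, by omega⟩
    · exact ⟨y, congrArg Fin.val hp⟩
  have hitT : ∀ v, T ≤ v → v < k → ∃ x, (σ (toLex (Sum.inl x)) : ℕ) = v := by
    intro v hv1 hv2
    obtain ⟨p, hp⟩ := hsurj ⟨v, hv2⟩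
    rcases p with x | y
    · exact ⟨x, congrArg Fin.val hp⟩
    · have hval : (σ (toLex (Sum.inr y)) : ℕ) = v := congrArg Fin.val hp
      have h1 := hy₀ y
      exact ⟨x₀, by omega⟩
  -- the two component partitions
  have hfbd : ∀ x : α, (σ (toLex (Sum.inl x)) : ℕ) - T < k - T := by
    intro x
    have h1 := (σ (toLex (Sum.inl x))).isLt
    have h2 := hx₀ x
    omega
  have hgbd : ∀ y : β, (σ (toLex (Sum.inr y)) : ℕ) < B := by
    intro y; have := hy₀ y; omega
  set f : α → Fin (k - T) := fun x => ⟨(σ (toLex (Sum.inl x)) : ℕ) - T, hfbd x⟩ with hfdef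
  set g : β → Fin B := fun y => ⟨(σ (toLex (Sum.inr y)) : ℕ), hgbd y⟩ with hgdef
  have hf : Function.Surjective f := by
    rintro ⟨v, hv⟩
    obtain ⟨x, hx⟩ := hitT (T + v) (by omega) (by omega)
    refine ⟨x, Fin.ext ?_⟩
    show (σ (toLex (Sum.inl x)) : ℕ) - T = v
    omega
  have hg : Function.Surjective g := by
    rintro ⟨v, hv⟩
    obtain ⟨y, hy⟩ := hitB v hv
    exact ⟨y, Fin.ext hy⟩
  have hfp : IsPPartition ω f := by
    constructor
    · intro x y hxy
      have h1 : (σ (toLex (Sum.inl y)) : ℕ) ≤ (σ (toLex (Sum.inl x)) : ℕ) :=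
        hle _ _ (Sum.Lex.inl_le_inl_iff.mpr hxy)
      show (σ (toLex (Sum.inl y)) : ℕ) - T ≤ (σ (toLex (Sum.inl x)) : ℕ) - T
      omega
    · intro x y hxy hw
      have hmu : μ (Sum.inl y) < μ (Sum.inl x) := (hlA y x).mpr hw
      have h1 : (σ (toLex (Sum.inl y)) : ℕ) < (σ (toLex (Sum.inl x)) : ℕ) :=
        hstrict _ _ (Sum.Lex.inl_lt_inl_iff.mpr hxy) hmu
      show (σ (toLex (Sum.inl y)) : ℕ) - T < (σ (toLex (Sum.inl x)) : ℕ) - T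
      have := hx₀ y
      omega
  have hgp : IsPPartition ν g := by
    constructor
    · intro x y hxy
      have h1 : (σ (toLex (Sum.inr y)) : ℕ) ≤ (σ (toLex (Sum.inr x)) : ℕ) :=
        hle _ _ (Sum.Lex.inr_le_inr_iff.mpr hxy)
      exact h1
    · intro x y hxy hw
      have hmu : μ (Sum.inr y) < μ (Sum.inr x) := (hlB y x).mpr hw
      have h1 : (σ (toLex (Sum.inr y)) : ℕ) < (σ (toLex (Sum.inr x)) : ℕ) :=
        hstrict _ _ (Sum.Lex.inr_lt_inr_iff.mpr hxy) hmu
      exact h1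
  by_cases hTB' : T = B
  · refine ⟨Sum.inl ⟨⟨(k - T, B), Finset.HasAntidiagonal.mem_antidiagonal.mpr (by omega)⟩,
      ⟨f, hf, hfp⟩, ⟨g, hg, hgp⟩⟩, ?_⟩
    apply Subtype.ext
    funext p
    rcases p with x | y
    · apply Fin.ext
      show B + ((σ (toLex (Sum.inl x)) : ℕ) - T) = (σ (toLex (Sum.inl x)) : ℕ)
      have := hx₀ x; omega
    · apply Fin.ext
      show (σ (toLex (Sum.inr y)) : ℕ) = (σ (toLex (Sum.inr y)) : ℕ)
      rfl
  · have hT1 : T = B - 1 := by omega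
    refine ⟨Sum.inr ⟨⟨(k - T, B), Finset.HasAntidiagonal.mem_antidiagonal.mpr (by omega)⟩,
      ⟨f, hf, hfp⟩, ⟨g, hg, hgp⟩⟩, ?_⟩
    apply Subtype.ext
    funext p
    rcases p with x | y
    · apply Fin.ext
      show (B - 1) + ((σ (toLex (Sum.inl x)) : ℕ) - T) = (σ (toLex (Sum.inl x)) : ℕ)
      have := hx₀ x; omega
    · apply Fin.ext
      show (σ (toLex (Sum.inr y)) : ℕ) = (σ (toLex (Sum.inr y)) : ℕ)
      rfl

end Surj
section Count

variable {α β : Type} [PartialOrder α] [PartialOrder β]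

lemma natCard_DT [Finite α] [Finite β] (ω : α → ℕ) (ν : β → ℕ) (k : ℕ) :
    Nat.card (DT α β ω ν k) =
      (∑ p ∈ Finset.HasAntidiagonal.antidiagonal k, ecnt α ω p.1 * ecnt β ν p.2) +
      (∑ p ∈ Finset.HasAntidiagonal.antidiagonal (k + 1), ecnt α ω p.1 * ecnt β ν p.2) := by
  classical
  have hpart : ∀ n : ℕ,
      Nat.card ((p : Finset.HasAntidiagonal.antidiagonal n) × (SPart α ω p.1.1 × SPart β ν p.1.2)) =
        ∑ p ∈ Finset.HasAntidiagonal.antidiagonal n, ecnt α ω p.1 * ecnt β ν p.2 := by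
    intro n
    letI : ∀ j : ℕ, Fintype (SPart α ω j) := fun j => Fintype.ofFinite _
    letI : ∀ j : ℕ, Fintype (SPart β ν j) := fun j => Fintype.ofFinite _
    rw [Nat.card_eq_fintype_card, Fintype.card_sigma,
      ← Finset.sum_coe_sort (Finset.HasAntidiagonal.antidiagonal n) (fun p => ecnt α ω p.1 * ecnt β ν p.2)]
    apply Finset.sum_congr rfl
    intro p _
    rw [Fintype.card_prod, ecnt, ecnt, Nat.card_eq_fintype_card, Nat.card_eq_fintype_card]
  show Nat.card (_ ⊕ _) = _
  rw [Nat.card_sum, hpart, hpart]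

lemma ecnt_lex_sum [Finite α] [Finite β] [Nonempty α] [Nonempty β]
    {ω : α → ℕ} {ν : β → ℕ} {μ : α ⊕ β → ℕ}
    (hlA : ∀ x y : α, μ (Sum.inl x) < μ (Sum.inl y) ↔ ω x < ω y)
    (hlB : ∀ x y : β, μ (Sum.inr x) < μ (Sum.inr y) ↔ ν x < ν y)
    (h3 : ∀ (x : α) (y : β), μ (Sum.inl x) < μ (Sum.inr y)) (k : ℕ) :
    ecnt (α ⊕ₗ β) (fun p => μ (ofLex p)) k =
      (∑ p ∈ Finset.HasAntidiagonal.antidiagonal k, ecnt α ω p.1 * ecnt β ν p.2) +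
      (∑ p ∈ Finset.HasAntidiagonal.antidiagonal (k + 1), ecnt α ω p.1 * ecnt β ν p.2) := by
  rw [← natCard_DT ω ν k, ecnt]
  exact (Nat.card_eq_of_bijective (bigGlue hlA hlB h3 k)
    ⟨bigGlue_inj hlA hlB h3 k, bigGlue_surj hlA hlB h3 k⟩).symm

end Count

/-- **Proposition 3.1, second part.** For nonempty `P`, `Q` and a labelling `μ = ω ⊕₀ ν`
(labels increase from `P` to `Q`) of the ordinal sum,
`x · E(P ⊕ Q, ω ⊕₀ ν) = (x+1) · E(P,ω) · E(Q,ν)`. -/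
theorem Epoly_ordinal_sum_zero (α β : Type) [PartialOrder α] [PartialOrder β]
    [Finite α] [Finite β] [Nonempty α] [Nonempty β]
    (ω : α → ℕ) (ν : β → ℕ) (hω : Function.Injective ω) (hν : Function.Injective ν)
    (μ : α ⊕ β → ℕ) (hμ : Function.Injective μ)
    (h1 : ∀ x y : α, ω x < ω y → μ (Sum.inl x) < μ (Sum.inl y))
    (h2 : ∀ x y : β, ν x < ν y → μ (Sum.inr x) < μ (Sum.inr y))
    (h3 : ∀ (x : α) (y : β), μ (Sum.inl x) < μ (Sum.inr y)) :
    X * Epoly (α ⊕ₗ β) (fun p => μ (ofLex p)) = (X + 1) * (Epoly α ω * Epoly β ν) := by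
  have hlA : ∀ x y : α, μ (Sum.inl x) < μ (Sum.inl y) ↔ ω x < ω y :=
    lbl_iff ω (fun x => μ (Sum.inl x)) hω (hμ.comp Sum.inl_injective) h1
  have hlB : ∀ x y : β, μ (Sum.inr x) < μ (Sum.inr y) ↔ ν x < ν y :=
    lbl_iff ν (fun y => μ (Sum.inr y)) hν (hμ.comp Sum.inr_injective) h2
  haveI : Finite (α ⊕ₗ β) := Finite.of_equiv _ toLex
  haveI : Nonempty (α ⊕ₗ β) := ⟨toLex (Sum.inl (Classical.arbitrary α))⟩
  ext n
  rw [add_mul, one_mul]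
  match n with
  | 0 =>
    rw [Polynomial.mul_coeff_zero, Polynomial.coeff_add, Polynomial.mul_coeff_zero,
      Polynomial.coeff_X_zero, Polynomial.mul_coeff_zero, coeff_Epoly_s15, coeff_Epoly_s15,
      ecnt_zero, ecnt_zero]
    simp
  | Nat.succ n =>
    rw [Polynomial.coeff_X_mul, Polynomial.coeff_add, Polynomial.coeff_X_mul,
      coeff_Epoly_s15, ecnt_lex_sum hlA hlB h3 n, Polynomial.coeff_mul, Polynomial.coeff_mul]
    push_cast
    congr 1 <;>
    · apply Finset.sum_congr rfl
      intro p _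
      rw [coeff_Epoly_s15, coeff_Epoly_s15]
end

section
/- For all finite labelled posets (P,ω) and (Q,ν), E(P ⊔ Q, ω ⊔ ν) = E(P,ω) ◇ E(Q,ν), where P ⊔ Q is the disjoint union of the posets and ω ⊔ ν is any labelling of P ⊔ Q satisfying (ω ⊔ ν)(x) < (ω ⊔ ν)(y) whenever ω(x) < ω(y) (x,y ∈ P) or ν(x) < ν(y) (x,y ∈ Q). -/
open Polynomial

/-- The diamond product `f ◇ g = Σₙ (f⁽ⁿ⁾/n!)(g⁽ⁿ⁾/n!) xⁿ(x+1)ⁿ`. -/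
noncomputable def diamond (f g : Polynomial ℝ) : Polynomial ℝ :=
  ∑ n ∈ Finset.range (f.natDegree + 1),
    C (((n.factorial : ℝ) * n.factorial)⁻¹) *
      (derivative^[n] f) * (derivative^[n] g) * (X * (X + 1)) ^ n


section aux
open Finset


lemma choose_mul_choose_of_le {j n m : ℕ} (hmn : m ≤ n) :
    j.choose n * n.choose m = j.choose m * (j - m).choose (n - m) := by
  rcases le_or_gt n j with h | h
  · exact Nat.choose_mul hmn
  · rcases le_or_gt m j with h' | h'
    · rw [Nat.choose_eq_zero_of_lt h, Nat.choose_eq_zero_of_lt (show j - m < n - m by omega),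
        zero_mul, mul_zero]
    · rw [Nat.choose_eq_zero_of_lt h, Nat.choose_eq_zero_of_lt h', zero_mul, zero_mul]

lemma key_choose (i j m : ℕ) (hmi : m ≤ i) (hmj : m ≤ j) :
    ∑ n ∈ range (i+1), i.choose n * j.choose n * n.choose m
      = (i + j - m).choose i * i.choose m := by
  have step1 : ∑ n ∈ range (i+1), i.choose n * j.choose n * n.choose m
      = ∑ n ∈ range (i+1), if m ≤ n then
          j.choose m * (i.choose n * (j - m).choose (n - m)) else 0 := by
    refine Finset.sum_congr rfl fun n _ => ?_
    split_ifs with h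
    · rw [mul_assoc, choose_mul_choose_of_le h]; ring
    · have : n.choose m = 0 := Nat.choose_eq_zero_of_lt (by omega)
      rw [this, mul_zero]
  rw [step1, ← Finset.sum_filter]
  have hfil : (range (i+1)).filter (fun n => m ≤ n) = Finset.Ico m (i+1) := by
    ext n; simp [Finset.mem_filter, Finset.mem_Ico, and_comm]
  rw [hfil, Finset.sum_Ico_eq_sum_range]
  have hrange : i + 1 - m = (i - m + 1) := by omega
  rw [hrange, ← Finset.mul_sum]
  have vdm : (i + j - m).choose (i - m)
      = ∑ t ∈ range (i - m + 1), i.choose t * (j-m).choose (i-m-t) := by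
    have h : i + j - m = i + (j - m) := by omega
    rw [h, Nat.add_choose_eq,
      Finset.Nat.sum_antidiagonal_eq_sum_range_succ (fun a b => i.choose a * (j-m).choose b)]
  have hS : ∑ t ∈ range (i - m + 1), i.choose (m + t) * (j - m).choose (m + t - m)
      = (i + j - m).choose (i - m) := by
    rw [vdm, ← Finset.sum_range_reflect (fun t => i.choose (m+t) * (j-m).choose (m+t-m)) (i-m+1)]
    refine Finset.sum_congr rfl fun t ht => ?_
    rw [Finset.mem_range] at ht
    have h1 : m + (i - m + 1 - 1 - t) = i - t := by omega
    have h2 : m + (i - m + 1 - 1 - t) - m = i - m - t := by omega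
    rw [h2, h1]
    congr 1
    rw [← Nat.choose_symm (show t ≤ i by omega)]
  rw [hS]
  -- final: j.choose m * (i+j-m).choose (i-m) = (i+j-m).choose i * i.choose m
  have hA : (i + j - m).choose j * j.choose m
      = (i + j - m).choose m * (i + j - m - m).choose (j - m) :=
    Nat.choose_mul hmj
  have hB : (i + j - m).choose i * i.choose m
      = (i + j - m).choose m * (i + j - m - m).choose (i - m) :=
    Nat.choose_mul hmi
  have hsymm1 : (i + j - m).choose j = (i + j - m).choose (i - m) :=
    Nat.choose_symm_of_eq_add (by omega)
  have hsymm2 : (i + j - m - m).choose (j - m) = (i + j - m - m).choose (i - m) :=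
    Nat.choose_symm_of_eq_add (by omega)
  rw [hsymm1, hsymm2] at hA
  rw [hB, ← hA]; ring

def NNf (k i j : ℕ) : ℕ := ((Finset.univ : Finset (Finset (Fin k) × Finset (Fin k))).filter
  (fun q => q.1.card = i ∧ q.2.card = j ∧ q.1 ∪ q.2 = Finset.univ)).card

lemma NNf_eq_zero_of_lt {k i j : ℕ} (h : i + j < k) : NNf k i j = 0 := by
  unfold NNf
  rw [Finset.card_eq_zero, Finset.filter_eq_empty_iff]
  rintro q - ⟨h1, h2, h3⟩
  have hk : (Finset.univ : Finset (Fin k)).card = k := by simp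
  have := Finset.card_union_le q.1 q.2
  rw [h3, hk, h1, h2] at this
  omega

lemma NNf_eq_zero_left {k i j : ℕ} (h : k < i) : NNf k i j = 0 := by
  unfold NNf
  rw [Finset.card_eq_zero, Finset.filter_eq_empty_iff]
  rintro q - ⟨h1, h2, h3⟩
  have := Finset.card_le_univ q.1
  simp [h1] at this
  omega

lemma NNf_eq_zero_right {k i j : ℕ} (h : k < j) : NNf k i j = 0 := by
  unfold NNf
  rw [Finset.card_eq_zero, Finset.filter_eq_empty_iff]
  rintro q - ⟨h1, h2, h3⟩
  have := Finset.card_le_univ q.2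
  simp [h2] at this
  omega

lemma nat_card_sigma' {ι : Type*} [Fintype ι] (f : ι → Type*) [∀ i, Finite (f i)] :
    Nat.card (Σ i, f i) = ∑ i, Nat.card (f i) := by
  letI := fun i => Fintype.ofFinite (f i)
  rw [Nat.card_eq_fintype_card, Fintype.card_sigma]
  exact Finset.sum_congr rfl fun i _ => (Nat.card_eq_fintype_card).symm

def pairEquiv (k i j : ℕ) (hk : k ≤ i + j) :
    {q : Finset (Fin k) × Finset (Fin k) //
        q.1.card = i ∧ q.2.card = j ∧ q.1 ∪ q.2 = Finset.univ} ≃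
      Σ A : {A : Finset (Fin k) // A.card = i},
        {S : Finset (Fin k) // S ⊆ A.1 ∧ S.card = i + j - k} where
  toFun q := ⟨⟨q.1.1, q.2.1⟩, ⟨q.1.1 ∩ q.1.2, Finset.inter_subset_left, by
    obtain ⟨h1, h2, h3⟩ := q.2
    have hcui : (q.1.1 ∪ q.1.2).card + (q.1.1 ∩ q.1.2).card = q.1.1.card + q.1.2.card :=
      Finset.card_union_add_card_inter _ _
    rw [h3, h1, h2] at hcui
    simp only [Finset.card_univ, Fintype.card_fin] at hcui
    omega⟩⟩
  invFun s := ⟨(s.1.1, s.2.1 ∪ (s.1.1)ᶜ), s.1.2, by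
    have hd : Disjoint s.2.1 (s.1.1)ᶜ :=
      disjoint_compl_right.mono_left (Finset.le_iff_subset.2 s.2.2.1)
    rw [Finset.card_union_of_disjoint hd, Finset.card_compl, s.2.2.2, s.1.2]
    have hik : i ≤ k := by
      have := Finset.card_le_univ s.1.1
      simp [s.1.2] at this
      omega
    simp only [Fintype.card_fin]
    omega, by
    ext x
    simp only [Finset.mem_union, Finset.mem_compl, Finset.mem_univ, iff_true]
    tauto⟩
  left_inv q := by
    apply Subtype.ext
    obtain ⟨⟨A, B⟩, h1, h2, h3⟩ := q
    have hAB : ∀ x, x ∈ A ∨ x ∈ B := by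
      intro x
      have := Finset.eq_univ_iff_forall.1 h3 x
      rwa [Finset.mem_union] at this
    have hB : (A ∩ B) ∪ Aᶜ = B := by
      ext x
      simp only [Finset.mem_union, Finset.mem_inter, Finset.mem_compl]
      specialize hAB x
      tauto
    show (A, (A ∩ B) ∪ Aᶜ) = (A, B)
    rw [hB]
  right_inv s := by
    obtain ⟨⟨A, hA⟩, ⟨S, hS1, hS2⟩⟩ := s
    refine Sigma.ext rfl ?_
    simp only [heq_eq_eq]
    apply Subtype.ext
    simp only
    ext x
    simp only [Finset.mem_inter, Finset.mem_union, Finset.mem_compl]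
    have := @hS1 x
    tauto

lemma NNf_closed {k i j : ℕ} (hk : k ≤ i + j) :
    NNf k i j = k.choose i * i.choose (i + j - k) := by
  classical
  have h0 : NNf k i j = Nat.card {q : Finset (Fin k) × Finset (Fin k) //
      q.1.card = i ∧ q.2.card = j ∧ q.1 ∪ q.2 = Finset.univ} := by
    rw [Nat.card_eq_fintype_card, Fintype.card_subtype]
    rfl
  rw [h0, Nat.card_congr (pairEquiv k i j hk), nat_card_sigma']
  have hfib : ∀ A : {A : Finset (Fin k) // A.card = i},
      Nat.card {S : Finset (Fin k) // S ⊆ A.1 ∧ S.card = i + j - k}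
        = i.choose (i + j - k) := by
    intro A
    rw [Nat.card_congr (Equiv.subtypeEquivRight
        (q := fun S => S ∈ Finset.powersetCard (i + j - k) A.1)
        (fun S => Finset.mem_powersetCard.symm)),
      Nat.card_eq_finsetCard, Finset.card_powersetCard, A.2]
  rw [Finset.sum_congr rfl (fun A _ => hfib A), Finset.sum_const, smul_eq_mul]
  have hA : Fintype.card {A : Finset (Fin k) // A.card = i} = k.choose i := by
    rw [Fintype.card_eq_nat_card,
      Nat.card_congr (Equiv.subtypeEquivRight
        (q := fun A => A ∈ Finset.powersetCard i Finset.univ)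
        (fun A => ⟨fun h => Finset.mem_powersetCard.2 ⟨Finset.subset_univ _, h⟩,
          fun h => (Finset.mem_powersetCard.1 h).2⟩)),
      Nat.card_eq_finsetCard, Finset.card_powersetCard, Finset.card_univ, Fintype.card_fin]
  rw [Finset.card_univ, hA]
lemma key2 (a k i j : ℕ) (hia : i ≤ a) :
    ∑ n ∈ range (a+1), i.choose n * j.choose n *
      (if (i-n)+(j-n)+n ≤ k then n.choose (k-((i-n)+(j-n)+n)) else 0) = NNf k i j := by
  by_cases hk : k ≤ i + j
  · rw [NNf_closed hk]
    have hterm : ∀ n ∈ range (a+1), i.choose n * j.choose n *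
        (if (i-n)+(j-n)+n ≤ k then n.choose (k-((i-n)+(j-n)+n)) else 0)
        = i.choose n * j.choose n * n.choose (i+j-k) := by
      intro n _
      by_cases hni : n ≤ i
      · by_cases hnj : n ≤ j
        · have hd : (i-n)+(j-n)+n = i+j-n := by omega
          rw [hd]
          by_cases hc : i+j-n ≤ k
          · rw [if_pos hc]
            have h1 : k - (i+j-n) = n - (i+j-k) := by omega
            have h2 : i+j-k ≤ n := by omega
            rw [h1, Nat.choose_symm h2]
          · rw [if_neg hc, Nat.choose_eq_zero_of_lt (show n < i+j-k by omega), mul_zero]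
        · rw [Nat.choose_eq_zero_of_lt (show j < n by omega)]
          simp
      · rw [Nat.choose_eq_zero_of_lt (show i < n by omega)]
        simp
    rw [Finset.sum_congr rfl hterm]
    by_cases hmi : i + j - k ≤ i
    · by_cases hmj : i + j - k ≤ j
      · have hshrink : ∑ n ∈ range (a+1), i.choose n * j.choose n * n.choose (i+j-k)
            = ∑ n ∈ range (i+1), i.choose n * j.choose n * n.choose (i+j-k) := by
          refine (Finset.sum_subset (Finset.range_subset_range.2 (by omega)) ?_).symm
          intro n _ hn
          rw [Finset.mem_range] at hn
          rw [Nat.choose_eq_zero_of_lt (show i < n by omega)]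
          simp
        rw [hshrink, key_choose i j (i+j-k) hmi hmj]
        congr 2
        omega
      · rw [Nat.choose_eq_zero_of_lt (show k < i by omega), zero_mul]
        refine Finset.sum_eq_zero fun n _ => ?_
        by_cases hnj : n ≤ j
        · rw [Nat.choose_eq_zero_of_lt (show n < i + j - k by omega), mul_zero]
        · rw [Nat.choose_eq_zero_of_lt (show j < n by omega)]
          simp
    · rw [Nat.choose_eq_zero_of_lt (show i < i + j - k by omega), mul_zero]
      refine Finset.sum_eq_zero fun n _ => ?_
      by_cases hni : n ≤ i
      · rw [Nat.choose_eq_zero_of_lt (show n < i + j - k by omega), mul_zero]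
      · rw [Nat.choose_eq_zero_of_lt (show i < n by omega)]
        simp
  · rw [NNf_eq_zero_of_lt (by omega)]
    refine Finset.sum_eq_zero fun n _ => ?_
    by_cases hni : n ≤ i
    · by_cases hnj : n ≤ j
      · rw [if_pos (show (i-n)+(j-n)+n ≤ k by omega),
          Nat.choose_eq_zero_of_lt (show n < k - ((i-n)+(j-n)+n) by omega), mul_zero]
      · rw [Nat.choose_eq_zero_of_lt (show j < n by omega)]
        simp
    · rw [Nat.choose_eq_zero_of_lt (show i < n by omega)]
      simp

lemma Kpoly (a b i j : ℕ) (hia : i ≤ a) (hjb : j ≤ b) :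
    ∑ n ∈ range (a+1), C ((i.choose n * j.choose n : ℕ) : ℝ) *
        (X^(i-n) * X^(j-n) * (X*(X+1))^n)
      = ∑ k ∈ range (a+b+1), C ((NNf k i j : ℕ) : ℝ) * X^k := by
  ext k
  rw [finset_sum_coeff, finset_sum_coeff]
  have hmon : ∀ n : ℕ, (X^(i-n) * X^(j-n) * (X*(X+1))^n : ℝ[X])
      = (X+1)^n * X^((i-n)+(j-n)+n) := by
    intro n
    rw [mul_pow, pow_add, pow_add]
    ring
  have hL : ∀ n ∈ range (a+1),
      (C ((i.choose n * j.choose n : ℕ) : ℝ) * (X^(i-n) * X^(j-n) * (X*(X+1))^n)).coeff k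
      = ((i.choose n * j.choose n *
          (if (i-n)+(j-n)+n ≤ k then n.choose (k-((i-n)+(j-n)+n)) else 0) : ℕ) : ℝ) := by
    intro n _
    rw [hmon n, coeff_C_mul, coeff_mul_X_pow', coeff_X_add_one_pow]
    push_cast
    split_ifs <;> simp
  rw [Finset.sum_congr rfl hL]
  have hR : ∀ k' ∈ range (a+b+1),
      (C ((NNf k' i j : ℕ) : ℝ) * X^k').coeff k
        = if k = k' then ((NNf k' i j : ℕ) : ℝ) else 0 := by
    intro k' _
    rw [coeff_C_mul, coeff_X_pow]
    split_ifs <;> simp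
  rw [Finset.sum_congr rfl hR, Finset.sum_ite_eq (range (a+b+1)) k
    (fun k' => ((NNf k' i j : ℕ) : ℝ))]
  rw [← Nat.cast_sum]
  rw [show (∑ n ∈ range (a+1), i.choose n * j.choose n *
        (if (i-n)+(j-n)+n ≤ k then n.choose (k-((i-n)+(j-n)+n)) else 0)) = NNf k i j
      from key2 a k i j hia]
  by_cases hmem : k ∈ range (a+b+1)
  · rw [if_pos hmem]
  · rw [if_neg hmem]
    rw [Finset.mem_range] at hmem
    rw [NNf_eq_zero_of_lt (by omega)]
    simp

lemma diamond_expand (a b : ℕ) (E F : ℕ → ℕ) :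
    diamond (∑ i ∈ range (a+1), C ((E i : ℕ) : ℝ) * X^i)
        (∑ j ∈ range (b+1), C ((F j : ℕ) : ℝ) * X^j)
      = ∑ k ∈ range (a+b+1),
          C ((∑ i ∈ range (a+1), ∑ j ∈ range (b+1), E i * F j * NNf k i j : ℕ) : ℝ) * X^k := by
  set f : ℝ[X] := ∑ i ∈ range (a+1), C ((E i : ℕ) : ℝ) * X^i with hf
  set g : ℝ[X] := ∑ j ∈ range (b+1), C ((F j : ℕ) : ℝ) * X^j with hg
  have hdeg : f.natDegree ≤ a := by
    refine natDegree_sum_le_of_forall_le _ _ fun i hi => ?_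
    refine le_trans (natDegree_C_mul_le _ _) ?_
    rw [natDegree_X_pow]
    exact Nat.lt_succ_iff.1 (Finset.mem_range.1 hi)
  have step1 : diamond f g = ∑ n ∈ range (a+1),
      C (((n.factorial : ℝ) * n.factorial)⁻¹) *
        (derivative^[n] f) * (derivative^[n] g) * (X * (X + 1)) ^ n := by
    refine Finset.sum_subset (Finset.range_subset_range.2 (by omega)) ?_
    intro n _ hn
    rw [Finset.mem_range] at hn
    rw [iterate_derivative_eq_zero (p := f) (by omega)]
    ring
  have hdf : ∀ n : ℕ, derivative^[n] f
      = ∑ i ∈ range (a+1), C ((E i : ℕ) : ℝ) * (C ((i.descFactorial n : ℕ) : ℝ) * X^(i-n)) := by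
    intro n
    rw [hf, iterate_derivative_sum]
    exact Finset.sum_congr rfl fun i _ => by
      rw [iterate_derivative_C_mul, iterate_derivative_X_pow_eq_C_mul]
  have hdg : ∀ n : ℕ, derivative^[n] g
      = ∑ j ∈ range (b+1), C ((F j : ℕ) : ℝ) * (C ((j.descFactorial n : ℕ) : ℝ) * X^(j-n)) := by
    intro n
    rw [hg, iterate_derivative_sum]
    exact Finset.sum_congr rfl fun j _ => by
      rw [iterate_derivative_C_mul, iterate_derivative_X_pow_eq_C_mul]
  have step2 : diamond f g = ∑ n ∈ range (a+1), ∑ i ∈ range (a+1), ∑ j ∈ range (b+1),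
      C ((E i * F j : ℕ) : ℝ) *
        (C ((i.choose n * j.choose n : ℕ) : ℝ) * (X^(i-n) * X^(j-n) * (X*(X+1))^n)) := by
    rw [step1]
    refine Finset.sum_congr rfl fun n _ => ?_
    rw [hdf n, hdg n, Finset.mul_sum (s := range (a+1)), Finset.sum_mul_sum, Finset.sum_mul]
    refine Finset.sum_congr rfl fun i _ => ?_
    rw [Finset.sum_mul]
    refine Finset.sum_congr rfl fun j _ => ?_
    have hc : ((n.factorial : ℝ) * n.factorial)⁻¹ * (i.descFactorial n : ℝ) *
        (j.descFactorial n : ℝ) = ((i.choose n * j.choose n : ℕ) : ℝ) := by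
      rw [Nat.descFactorial_eq_factorial_mul_choose, Nat.descFactorial_eq_factorial_mul_choose]
      have h0 : (n.factorial : ℝ) ≠ 0 := Nat.cast_ne_zero.2 n.factorial_ne_zero
      push_cast
      field_simp
    have hC : (C (((n.factorial : ℝ) * n.factorial)⁻¹) * C ((i.descFactorial n : ℕ) : ℝ) *
        C ((j.descFactorial n : ℕ) : ℝ) : ℝ[X]) = C ((i.choose n * j.choose n : ℕ) : ℝ) := by
      rw [← C_mul, ← C_mul, hc]
    have hEF : (C ((E i * F j : ℕ) : ℝ) : ℝ[X]) = C ((E i : ℕ) : ℝ) * C ((F j : ℕ) : ℝ) := by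
      rw [Nat.cast_mul, C_mul]
    calc C (((n.factorial : ℝ) * n.factorial)⁻¹) *
          (C ((E i : ℕ) : ℝ) * (C ((i.descFactorial n : ℕ) : ℝ) * X^(i-n))) *
          (C ((F j : ℕ) : ℝ) * (C ((j.descFactorial n : ℕ) : ℝ) * X^(j-n))) * (X*(X+1))^n
        = (C (((n.factorial : ℝ) * n.factorial)⁻¹) * C ((i.descFactorial n : ℕ) : ℝ) *
            C ((j.descFactorial n : ℕ) : ℝ)) *
          (C ((E i : ℕ) : ℝ) * C ((F j : ℕ) : ℝ)) *
          (X^(i-n) * X^(j-n) * (X*(X+1))^n) := by ring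
      _ = C ((i.choose n * j.choose n : ℕ) : ℝ) * (C ((E i : ℕ) : ℝ) * C ((F j : ℕ) : ℝ)) *
          (X^(i-n) * X^(j-n) * (X*(X+1))^n) := by rw [hC]
      _ = C ((E i * F j : ℕ) : ℝ) *
          (C ((i.choose n * j.choose n : ℕ) : ℝ) * (X^(i-n) * X^(j-n) * (X*(X+1))^n)) := by
          rw [hEF]; ring
  rw [step2, Finset.sum_comm]
  have step3 : ∀ i ∈ range (a+1), ∑ n ∈ range (a+1), ∑ j ∈ range (b+1),
      C ((E i * F j : ℕ) : ℝ) *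
        (C ((i.choose n * j.choose n : ℕ) : ℝ) * (X^(i-n) * X^(j-n) * (X*(X+1))^n))
      = ∑ j ∈ range (b+1), C ((E i * F j : ℕ) : ℝ) *
          (∑ k ∈ range (a+b+1), C ((NNf k i j : ℕ) : ℝ) * X^k) := by
    intro i hi
    rw [Finset.sum_comm]
    refine Finset.sum_congr rfl fun j hj => ?_
    rw [← Finset.mul_sum, Kpoly a b i j (Nat.lt_succ_iff.1 (Finset.mem_range.1 hi))
      (Nat.lt_succ_iff.1 (Finset.mem_range.1 hj))]
  rw [Finset.sum_congr rfl step3]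
  have step4 : ∀ i ∈ range (a+1), (∑ j ∈ range (b+1), C ((E i * F j : ℕ) : ℝ) *
      (∑ k ∈ range (a+b+1), C ((NNf k i j : ℕ) : ℝ) * X^k))
      = ∑ k ∈ range (a+b+1), ∑ j ∈ range (b+1),
          C ((E i * F j * NNf k i j : ℕ) : ℝ) * X^k := by
    intro i _
    have h1 : ∀ j ∈ range (b+1), C ((E i * F j : ℕ) : ℝ) *
        (∑ k ∈ range (a+b+1), C ((NNf k i j : ℕ) : ℝ) * X^k)
        = ∑ k ∈ range (a+b+1), C ((E i * F j * NNf k i j : ℕ) : ℝ) * X^k := by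
      intro j _
      rw [Finset.mul_sum]
      refine Finset.sum_congr rfl fun k _ => ?_
      rw [← mul_assoc, ← C_mul, ← Nat.cast_mul]
    rw [Finset.sum_congr rfl h1, Finset.sum_comm]
  rw [Finset.sum_congr rfl step4, Finset.sum_comm]
  refine Finset.sum_congr rfl fun k _ => ?_
  have h2 : ∀ i ∈ range (a+1), ∑ j ∈ range (b+1), C ((E i * F j * NNf k i j : ℕ) : ℝ) * X^k
      = (∑ j ∈ range (b+1), C ((E i * F j * NNf k i j : ℕ) : ℝ)) * X^k :=
    fun i _ => (Finset.sum_mul _ _ _).symm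
  rw [Finset.sum_congr rfl h2, ← Finset.sum_mul]
  congr 1
  rw [Nat.cast_sum, map_sum]
  refine Finset.sum_congr rfl fun i _ => ?_
  rw [Nat.cast_sum, map_sum]
section comb

variable {α β : Type} [PartialOrder α] [PartialOrder β] [Fintype α] [Fintype β]
variable {ω : α → ℕ} {ν : β → ℕ} {μ : α ⊕ β → ℕ}

/-- strict-compatibility of labellings preserves `IsPPartition`. -/
lemma isPP_iff_of_compat {ω' : α → ℕ} (h : ∀ x y : α, x < y → (ω' y < ω' x ↔ ω y < ω x))
    {k : ℕ} (σ : α → Fin k) : IsPPartition ω' σ ↔ IsPPartition ω σ := by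
  unfold IsPPartition
  refine and_congr Iff.rfl ⟨fun H x y hxy hw => H x y hxy ((h x y hxy).2 hw),
    fun H x y hxy hw => H x y hxy ((h x y hxy).1 hw)⟩

lemma mu_iff_l {γ : Type*} {ω : γ → ℕ} {m : γ → ℕ} (hω : Function.Injective ω)
    (h1 : ∀ x y : γ, ω x < ω y → m x < m y) (x y : γ) :
    m y < m x ↔ ω y < ω x := by
  constructor
  · intro h
    rcases lt_trichotomy (ω y) (ω x) with h' | h' | h'
    · exact h'
    · exact absurd (congrArg m (hω h')) (by omega)
    · exact absurd (h1 _ _ h') (by omega)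
  · exact h1 y x

lemma pp_split {k : ℕ} (hω : Function.Injective ω) (hν : Function.Injective ν)
    (h1 : ∀ x y : α, ω x < ω y → μ (Sum.inl x) < μ (Sum.inl y))
    (h2 : ∀ x y : β, ν x < ν y → μ (Sum.inr x) < μ (Sum.inr y))
    (σ : α ⊕ β → Fin k) :
    IsPPartition μ σ ↔
      IsPPartition ω (σ ∘ Sum.inl) ∧ IsPPartition ν (σ ∘ Sum.inr) := by
  constructor
  · rintro ⟨hm, hs⟩
    refine ⟨⟨fun x y hxy => hm _ _ (Sum.inl_le_inl_iff.2 hxy),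
        fun x y hxy hw => hs _ _ (Sum.inl_lt_inl_iff.2 hxy) ((mu_iff_l (m := fun x => μ (Sum.inl x)) hω h1 x y).2 hw)⟩,
      ⟨fun x y hxy => hm _ _ (Sum.inr_le_inr_iff.2 hxy),
        fun x y hxy hw => hs _ _ (Sum.inr_lt_inr_iff.2 hxy) ((mu_iff_l (m := fun x => μ (Sum.inr x)) hν h2 x y).2 hw)⟩⟩
  · rintro ⟨⟨hm1, hs1⟩, ⟨hm2, hs2⟩⟩
    constructor
    · rintro (x | x) (y | y) hxy
      · exact hm1 _ _ (Sum.inl_le_inl_iff.1 hxy)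
      · exact absurd hxy Sum.not_inl_le_inr
      · exact absurd hxy Sum.not_inr_le_inl
      · exact hm2 _ _ (Sum.inr_le_inr_iff.1 hxy)
    · rintro (x | x) (y | y) hxy hw
      · exact hs1 _ _ (Sum.inl_lt_inl_iff.1 hxy) ((mu_iff_l (m := fun x => μ (Sum.inl x)) hω h1 x y).1 hw)
      · exact absurd hxy.le Sum.not_inl_le_inr
      · exact absurd hxy.le Sum.not_inr_le_inl
      · exact hs2 _ _ (Sum.inr_lt_inr_iff.1 hxy) ((mu_iff_l (m := fun x => μ (Sum.inr x)) hν h2 x y).1 hw)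

end comb

noncomputable def eN (α : Type*) [PartialOrder α] (ω : α → ℕ) (k : ℕ) : ℕ :=
  Nat.card {σ : α → Fin k // Function.Surjective σ ∧ IsPPartition ω σ}

section fiber

variable {α : Type} [PartialOrder α] [Fintype α]

lemma mem_of_im {k : ℕ} {f : α → Fin k} {A : Finset (Fin k)}
    (h : Finset.image f Finset.univ = A) (x : α) : f x ∈ A :=
  h ▸ Finset.mem_image_of_mem f (Finset.mem_univ x)

noncomputable def fiberEquiv (ω : α → ℕ) (k : ℕ) (A : Finset (Fin k)) :
    {f : α → Fin k // Finset.image f Finset.univ = A ∧ IsPPartition ω f} ≃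
      {τ : α → Fin A.card // Function.Surjective τ ∧ IsPPartition ω τ} where
  toFun fp :=
    ⟨fun x => (A.orderIsoOfFin rfl).symm
        ⟨fp.1 x, mem_of_im fp.2.1 x⟩, by
      obtain ⟨him, hmono, hstrict⟩ := fp.2
      refine ⟨?_, ?_, ?_⟩
      · intro t
        have h1 : ((A.orderIsoOfFin rfl) t : Fin k) ∈ Finset.image fp.1 Finset.univ := by
          rw [him]; exact ((A.orderIsoOfFin rfl) t).2
        obtain ⟨x, -, hx⟩ := Finset.mem_image.1 h1
        refine ⟨x, ?_⟩
        have h2 : (⟨fp.1 x, mem_of_im fp.2.1 x⟩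
            : {a // a ∈ A}) = (A.orderIsoOfFin rfl) t := Subtype.ext hx
        show (A.orderIsoOfFin rfl).symm _ = t
        rw [h2, OrderIso.symm_apply_apply]
      · intro x y hxy
        exact (OrderIso.le_iff_le _).2 (Subtype.mk_le_mk.2 (hmono x y hxy))
      · intro x y hxy hw
        exact (OrderIso.lt_iff_lt _).2 (Subtype.mk_lt_mk.2 (hstrict x y hxy hw))⟩
  invFun tp :=
    ⟨fun x => ((A.orderIsoOfFin rfl) (tp.1 x) : Fin k), by
      obtain ⟨hsurj, hmono, hstrict⟩ := tp.2
      refine ⟨?_, ?_, ?_⟩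
      · ext t
        simp only [Finset.mem_image, Finset.mem_univ, true_and]
        constructor
        · rintro ⟨x, rfl⟩; exact ((A.orderIsoOfFin rfl) (tp.1 x)).2
        · intro ht
          obtain ⟨x, hx⟩ := hsurj ((A.orderIsoOfFin rfl).symm ⟨t, ht⟩)
          exact ⟨x, by rw [hx, OrderIso.apply_symm_apply]⟩
      · intro x y hxy
        exact Subtype.coe_le_coe.2 ((OrderIso.le_iff_le _).2 (hmono x y hxy))
      · intro x y hxy hw
        exact Subtype.coe_lt_coe.2 ((OrderIso.lt_iff_lt _).2 (hstrict x y hxy hw))⟩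
  left_inv fp := by
    apply Subtype.ext; funext x
    show ((A.orderIsoOfFin rfl) ((A.orderIsoOfFin rfl).symm
        ⟨fp.1 x, mem_of_im fp.2.1 x⟩) : Fin k) = fp.1 x
    rw [OrderIso.apply_symm_apply]
  right_inv tp := by
    apply Subtype.ext; funext x
    show (A.orderIsoOfFin rfl).symm ⟨((A.orderIsoOfFin rfl) (tp.1 x) : Fin k), _⟩ = tp.1 x
    exact ((A.orderIsoOfFin rfl).symm_apply_eq).mpr (Subtype.ext rfl)

lemma card_fiber (ω : α → ℕ) (k : ℕ) (A : Finset (Fin k)) :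
    Nat.card {f : α → Fin k // Finset.image f Finset.univ = A ∧ IsPPartition ω f}
      = eN α ω A.card := Nat.card_congr (fiberEquiv ω k A)

end fiber

lemma nat_card_sigma {ι : Type*} [Fintype ι] (f : ι → Type*) [∀ i, Finite (f i)] :
    Nat.card (Σ i, f i) = ∑ i, Nat.card (f i) := by
  letI := fun i => Fintype.ofFinite (f i)
  rw [Nat.card_eq_fintype_card, Fintype.card_sigma]
  exact Finset.sum_congr rfl fun i _ => (Nat.card_eq_fintype_card).symm

section main
variable {α β : Type} [PartialOrder α] [PartialOrder β] [Fintype α] [Fintype β]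
variable {ω : α → ℕ} {ν : β → ℕ} {μ : α ⊕ β → ℕ}

lemma e_sum_eq (hω : Function.Injective ω) (hν : Function.Injective ν)
    (h1 : ∀ x y : α, ω x < ω y → μ (Sum.inl x) < μ (Sum.inl y))
    (h2 : ∀ x y : β, ν x < ν y → μ (Sum.inr x) < μ (Sum.inr y)) (k : ℕ) :
    eN (α ⊕ β) μ k = ∑ q : Finset (Fin k) × Finset (Fin k),
      (if q.1 ∪ q.2 = Finset.univ then eN α ω q.1.card * eN β ν q.2.card else 0) := by
  classical
  have step1 : eN (α ⊕ β) μ k = Nat.card {p : (α → Fin k) × (β → Fin k) //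
      (Finset.image p.1 Finset.univ ∪ Finset.image p.2 Finset.univ = Finset.univ) ∧
        IsPPartition ω p.1 ∧ IsPPartition ν p.2} := by
    refine Nat.card_congr (Equiv.subtypeEquiv (Equiv.sumArrowEquivProdArrow α β (Fin k))
      (fun σ => and_congr ?_ (pp_split hω hν h1 h2 σ))
    )
    · constructor
      · intro hs
        rw [Finset.eq_univ_iff_forall]
        intro t
        obtain ⟨s, rfl⟩ := hs t
        cases s with
        | inl x => exact Finset.mem_union_left _ (Finset.mem_image_of_mem _ (Finset.mem_univ x))
        | inr x => exact Finset.mem_union_right _ (Finset.mem_image_of_mem _ (Finset.mem_univ x))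
      · intro h t
        have := (Finset.eq_univ_iff_forall.1 h) t
        rcases Finset.mem_union.1 this with h' | h'
        · obtain ⟨x, -, hx⟩ := Finset.mem_image.1 h'
          exact ⟨Sum.inl x, hx⟩
        · obtain ⟨x, -, hx⟩ := Finset.mem_image.1 h'
          exact ⟨Sum.inr x, hx⟩
  rw [step1]
  have step2 : Nat.card {p : (α → Fin k) × (β → Fin k) //
      (Finset.image p.1 Finset.univ ∪ Finset.image p.2 Finset.univ = Finset.univ) ∧
        IsPPartition ω p.1 ∧ IsPPartition ν p.2}
      = ∑ q : Finset (Fin k) × Finset (Fin k),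
          Nat.card {t : {p : (α → Fin k) × (β → Fin k) //
            (Finset.image p.1 Finset.univ ∪ Finset.image p.2 Finset.univ = Finset.univ) ∧
              IsPPartition ω p.1 ∧ IsPPartition ν p.2} //
            (Finset.image t.1.1 Finset.univ, Finset.image t.1.2 Finset.univ) = q} := by
    rw [← nat_card_sigma]
    exact Nat.card_congr (Equiv.sigmaFiberEquiv _).symm
  rw [step2]
  refine Finset.sum_congr rfl fun q _ => ?_
  by_cases hU : q.1 ∪ q.2 = Finset.univ
  · rw [if_pos hU, ← card_fiber ω k q.1, ← card_fiber ν k q.2, ← Nat.card_prod]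
    refine Nat.card_congr (Equiv.trans (Equiv.trans
      (Equiv.subtypeSubtypeEquivSubtypeInter
        (fun p : (α → Fin k) × (β → Fin k) =>
          (Finset.image p.1 Finset.univ ∪ Finset.image p.2 Finset.univ = Finset.univ) ∧
            IsPPartition ω p.1 ∧ IsPPartition ν p.2)
        (fun p => (Finset.image p.1 Finset.univ, Finset.image p.2 Finset.univ) = q))
      (Equiv.subtypeEquivRight ?_))
      Equiv.subtypeProdEquivProd)
    intro p
    constructor
    · rintro ⟨⟨hu, hp1, hp2⟩, hq⟩
      exact ⟨⟨(Prod.ext_iff.1 hq).1, hp1⟩, ⟨(Prod.ext_iff.1 hq).2, hp2⟩⟩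
    · rintro ⟨⟨hq1, hp1⟩, ⟨hq2, hp2⟩⟩
      exact ⟨⟨by rw [hq1, hq2]; exact hU, hp1, hp2⟩, by rw [hq1, hq2]⟩
  · rw [if_neg hU]
    haveI : IsEmpty {t : {p : (α → Fin k) × (β → Fin k) //
        (Finset.image p.1 Finset.univ ∪ Finset.image p.2 Finset.univ = Finset.univ) ∧
          IsPPartition ω p.1 ∧ IsPPartition ν p.2} //
        (Finset.image t.1.1 Finset.univ, Finset.image t.1.2 Finset.univ) = q} := by
      refine ⟨fun t => hU ?_⟩
      rw [← t.2]
      exact t.1.2.1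
    exact Nat.card_of_isEmpty

end main


lemma group_sum (k : ℕ) (E F : ℕ → ℕ) :
    ∑ q : Finset (Fin k) × Finset (Fin k),
      (if q.1 ∪ q.2 = Finset.univ then E q.1.card * F q.2.card else 0)
    = ∑ i ∈ Finset.range (k+1), ∑ j ∈ Finset.range (k+1), E i * F j * NNf k i j := by
  classical
  rw [← Finset.sum_product']
  rw [← Finset.sum_fiberwise_of_maps_to (g := fun q : Finset (Fin k) × Finset (Fin k) =>
    (q.1.card, q.2.card)) (t := Finset.range (k+1) ×ˢ Finset.range (k+1))
    (fun q _ => by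
      simp only [Finset.mem_product, Finset.mem_range, Nat.lt_succ_iff]
      exact ⟨le_trans (Finset.card_le_univ _) (by simp),
        le_trans (Finset.card_le_univ _) (by simp)⟩)]
  refine Finset.sum_congr rfl fun y _ => ?_
  have hcong : ∀ q ∈ Finset.univ.filter (fun q : Finset (Fin k) × Finset (Fin k) =>
      (q.1.card, q.2.card) = y),
      (if q.1 ∪ q.2 = Finset.univ then E q.1.card * F q.2.card else 0)
        = (if q.1 ∪ q.2 = Finset.univ then E y.1 * F y.2 else 0) := by
    intro q hq
    rw [Finset.mem_filter] at hq
    rw [← hq.2]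
  rw [Finset.sum_congr rfl hcong, Finset.sum_ite, Finset.sum_const, Finset.sum_const_zero,
    add_zero, smul_eq_mul, Finset.filter_filter, mul_comm]
  congr 1
  unfold NNf
  congr 1
  apply Finset.filter_congr
  intro q _
  constructor
  · rintro ⟨h1', h2'⟩
    exact (by rw [Prod.ext_iff] at h1'; exact ⟨h1'.1, h1'.2, h2'⟩)
  · rintro ⟨ha, hb, hc⟩
    exact ⟨by rw [Prod.ext_iff]; exact ⟨ha, hb⟩, hc⟩

lemma eN_eq_zero {α : Type} [PartialOrder α] [Fintype α] (ω : α → ℕ) {k : ℕ}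
    (h : Fintype.card α < k) : eN α ω k = 0 := by
  haveI : IsEmpty {σ : α → Fin k // Function.Surjective σ ∧ IsPPartition ω σ} := by
    refine ⟨fun σ => ?_⟩
    have := Fintype.card_le_of_surjective σ.1 σ.2.1
    rw [Fintype.card_fin] at this
    omega
  exact Nat.card_of_isEmpty

lemma reshape (f : ℕ → ℕ → ℕ) (A B K : ℕ)
    (hA : ∀ i j, A < i → f i j = 0) (hB : ∀ i j, B < j → f i j = 0)
    (hK1 : ∀ i j, K < i → f i j = 0) (hK2 : ∀ i j, K < j → f i j = 0) :
    ∑ i ∈ Finset.range (K+1), ∑ j ∈ Finset.range (K+1), f i j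
      = ∑ i ∈ Finset.range (A+1), ∑ j ∈ Finset.range (B+1), f i j := by
  set M := max K (max A B) with hM
  have helper : ∀ (g : ℕ → ℕ) (c : ℕ), (∀ j, c < j → g j = 0) → c ≤ M →
      ∑ j ∈ Finset.range (c+1), g j = ∑ j ∈ Finset.range (M+1), g j := by
    intro g c hc hcM
    refine Finset.sum_subset (Finset.range_subset_range.2 (by omega)) ?_
    intro j _ hj
    rw [Finset.mem_range] at hj
    exact hc j (by omega)
  calc ∑ i ∈ Finset.range (K+1), ∑ j ∈ Finset.range (K+1), f i j
      = ∑ i ∈ Finset.range (K+1), ∑ j ∈ Finset.range (M+1), f i j :=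
        Finset.sum_congr rfl fun i _ => helper (f i) K (fun j hj => hK2 i j hj) (by omega)
    _ = ∑ i ∈ Finset.range (M+1), ∑ j ∈ Finset.range (M+1), f i j :=
        helper _ K (fun i hi => Finset.sum_eq_zero fun j _ => hK1 i j hi) (by omega)
    _ = ∑ i ∈ Finset.range (M+1), ∑ j ∈ Finset.range (B+1), f i j :=
        Finset.sum_congr rfl fun i _ =>
          (helper (f i) B (fun j hj => hB i j hj) (by omega)).symm
    _ = ∑ i ∈ Finset.range (A+1), ∑ j ∈ Finset.range (B+1), f i j :=
        (helper _ A (fun i hi => Finset.sum_eq_zero fun j _ => hA i j hi) (by omega)).symm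

section final
variable {α β : Type} [PartialOrder α] [PartialOrder β] [Fintype α] [Fintype β]
variable {ω : α → ℕ} {ν : β → ℕ} {μ : α ⊕ β → ℕ}

lemma eN_formula (hω : Function.Injective ω) (hν : Function.Injective ν)
    (h1 : ∀ x y : α, ω x < ω y → μ (Sum.inl x) < μ (Sum.inl y))
    (h2 : ∀ x y : β, ν x < ν y → μ (Sum.inr x) < μ (Sum.inr y)) (k : ℕ) :
    eN (α ⊕ β) μ k = ∑ i ∈ Finset.range (Fintype.card α + 1),
      ∑ j ∈ Finset.range (Fintype.card β + 1), eN α ω i * eN β ν j * NNf k i j := by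
  rw [e_sum_eq hω hν h1 h2 k, group_sum]
  exact reshape _ _ _ _
    (fun i j hi => by rw [eN_eq_zero ω hi]; simp)
    (fun i j hj => by rw [eN_eq_zero ν hj]; simp)
    (fun i j hi => by rw [NNf_eq_zero_left hi]; simp)
    (fun i j hj => by rw [NNf_eq_zero_right hj]; simp)

end final


end aux

/-- **Equation (3).** For the disjoint union `P ⊔ Q` (the order on `α ⊕ β` with no relations
between the summands) with a labelling `μ = ω ⊔ ν` respecting `ω` and `ν`,
`E(P ⊔ Q, ω ⊔ ν) = E(P,ω) ◇ E(Q,ν)`. -/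
theorem Epoly_disjoint_union (α β : Type) [PartialOrder α] [PartialOrder β]
    [Finite α] [Finite β]
    (ω : α → ℕ) (ν : β → ℕ) (hω : Function.Injective ω) (hν : Function.Injective ν)
    (μ : α ⊕ β → ℕ) (hμ : Function.Injective μ)
    (h1 : ∀ x y : α, ω x < ω y → μ (Sum.inl x) < μ (Sum.inl y))
    (h2 : ∀ x y : β, ν x < ν y → μ (Sum.inr x) < μ (Sum.inr y)) :
    Epoly (α ⊕ β) μ = diamond (Epoly α ω) (Epoly β ν) := by
  letI : Fintype α := Fintype.ofFinite α
  letI : Fintype β := Fintype.ofFinite β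
  have ha : Nat.card α = Fintype.card α := Nat.card_eq_fintype_card
  have hb : Nat.card β = Fintype.card β := Nat.card_eq_fintype_card
  have hab : Nat.card (α ⊕ β) = Fintype.card α + Fintype.card β := by
    rw [Nat.card_sum, ha, hb]
  have hL : Epoly (α ⊕ β) μ = ∑ k ∈ Finset.range (Fintype.card α + Fintype.card β + 1),
      C ((eN (α ⊕ β) μ k : ℕ) : ℝ) * X^k := by
    rw [Epoly, hab]; rfl
  have hfa : Epoly α ω = ∑ i ∈ Finset.range (Fintype.card α + 1),
      C ((eN α ω i : ℕ) : ℝ) * X^i := by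
    rw [Epoly, ha]; rfl
  have hfb : Epoly β ν = ∑ j ∈ Finset.range (Fintype.card β + 1),
      C ((eN β ν j : ℕ) : ℝ) * X^j := by
    rw [Epoly, hb]; rfl
  rw [hL, hfa, hfb, diamond_expand (Fintype.card α) (Fintype.card β) (eN α ω) (eN β ν)]
  refine Finset.sum_congr rfl fun k _ => ?_
  rw [eN_formula hω hν h1 h2 k]
end
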